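/- arXiv:0811.0194 — 3 statements merged into one kernel-verified Lean document; each statement's English description precedes it below -/
import Mathlib

section
/- Let T be a tiling (finite set of pairwise disjoint diagrams in ℕ²) such that the projection of each diagram of T onto the first coordinate is an interval of integers. Define D ⪯ D' iff there exist (δ₁, δ₂) ∈ D and (δ₁', δ₂') ∈ D' with δ₁ = δ₁' and δ₂ ≤ δ₂'. Then the relation ⪯ extends to a partial order on T if and only if for all D, D' ∈ T, D ⪯ D' and D' ⪯ D imply D = D'. -/
open Finset

/-- The relation `⪯` of the paper: `D ⪯ D'` iff there are `(δ₁,δ₂) ∈ D` and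
`(δ₁',δ₂') ∈ D'` with `δ₁ = δ₁'` and `δ₂ ≤ δ₂'`. -/
def DiagRel (D D' : Finset (ℕ × ℕ)) : Prop :=
  ∃ δ ∈ D, ∃ δ' ∈ D', δ.1 = δ'.1 ∧ δ.2 ≤ δ'.2

/-!
Let `r` be the strict part of `⪯` and `R D` the last column of `D`. If `r` had a cycle, take a
diagram `V` on it with `R V` minimal, with predecessor `Z` and successor `B`. Since the columns
of `Z` and `B` form intervals reaching column `R V`, all three diagrams meet that column, where
antisymmetry forces `Z` below `V` below `B`; so `Z ⪯ B` and `V` can be cut out of the cycle.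
Hence the reflexive transitive closure of `r` is a partial order.
-/

namespace Relation

variable {α : Type*}

def deleteVertex (r : α → α → Prop) (v : α) : α → α → Prop :=
  fun x y => r x y ∧ x ≠ v ∧ y ≠ v

variable {r : α → α → Prop} {v : α}

theorem transGen_deleteVertex_of_transGen
    (hshort : ∀ z b, r z v → r v b → z ≠ b → r z b) (hasymm : ∀ x, r x v → ¬ r v x)
    {a b : α} (h : TransGen r a b) (ha : a ≠ v) :
    (b ≠ v → TransGen (deleteVertex r v) a b) ∧
      (b = v → ∃ z, ReflTransGen (deleteVertex r v) a z ∧ r z v) := by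
  induction h with
  | single hab =>
    exact ⟨fun hb => .single ⟨hab, ha, hb⟩, fun hb => ⟨a, .refl, hb ▸ hab⟩⟩
  | @tail c b _ hcb ih =>
    refine ⟨fun hb => ?_, fun hb => ?_⟩
    · by_cases hc : c = v
      · subst hc
        obtain ⟨z, haz, hzc⟩ := ih.2 rfl
        by_cases hzb : z = b
        · subst hzb
          rcases reflTransGen_iff_eq_or_transGen.mp haz with rfl | h
          · exact absurd hcb (hasymm _ hzc)
          · exact h
        · exact .tail' haz ⟨hshort z b hzc hcb hzb, by rintro rfl; exact hasymm _ hzc hzc, hb⟩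
      · exact (ih.1 hc).tail ⟨hcb, hc, hb⟩
    · subst hb
      have hc : c ≠ b := by rintro rfl; exact hasymm _ hcb hcb
      exact ⟨c, (ih.1 hc).to_reflTransGen, hcb⟩

theorem not_transGen_self_of_deleteVertex
    (hshort : ∀ z b, r z v → r v b → z ≠ b → r z b) (hasymm : ∀ x, r x v → ¬ r v x)
    (hdel : ∀ a, ¬ TransGen (deleteVertex r v) a a) (a : α) : ¬ TransGen r a a := by
  intro h
  by_cases ha : a = v
  · subst ha
    obtain ⟨c, hac, hca⟩ := TransGen.head'_iff.mp h
    have hc : c ≠ a := by rintro rfl; exact hasymm _ hac hac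
    have hca : TransGen r c a := (reflTransGen_iff_eq_or_transGen.mp hca).resolve_left hc.symm
    obtain ⟨z, hcz, hza⟩ := (transGen_deleteVertex_of_transGen hshort hasymm hca hc).2 rfl
    by_cases hzc : z = c
    · subst hzc
      exact hasymm _ hza hac
    · exact hdel c (.tail' hcz ⟨hshort z c hza hac hzc, by rintro rfl; exact hasymm _ hza hza, hc⟩)
  · exact hdel a ((transGen_deleteVertex_of_transGen hshort hasymm h ha).1 ha)

theorem not_transGen_self_of_shortcut {β : Type*} [LinearOrder β] (f : α → β)
    (S : Finset α) (hS : ∀ x y, r x y → x ∈ S ∧ y ∈ S) (hasymm : ∀ x y, r x y → ¬ r y x)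
    (hshort : ∀ z v b, r z v → r v b → f v ≤ f z → f v ≤ f b → z ≠ b → r z b) (a : α) :
    ¬ TransGen r a a := by
  classical
  induction S using Finset.strongInduction generalizing r a with
  | H S ih =>
    rcases S.eq_empty_or_nonempty with rfl | hne
    · intro h
      obtain ⟨c, hac, -⟩ := TransGen.head'_iff.mp h
      simpa using (hS a c hac).1
    obtain ⟨v, hv, hmin⟩ := S.exists_min_image f hne
    refine not_transGen_self_of_deleteVertex
      (fun z b hzv hvb => hshort z v b hzv hvb (hmin z (hS z v hzv).1) (hmin b (hS v b hvb).2))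
      (fun x hxv => hasymm x v hxv) (fun c => ih _ (S.erase_ssubset hv) ?_ ?_ ?_ c) a
    · rintro x y ⟨hxy, hx, hy⟩
      exact ⟨mem_erase.mpr ⟨hx, (hS x y hxy).1⟩, mem_erase.mpr ⟨hy, (hS x y hxy).2⟩⟩
    · exact fun x y hxy hyx => hasymm x y hxy.1 hyx.1
    · rintro z w b ⟨hzw, hz, -⟩ ⟨hwb, -, hb⟩ hwz hwb' hzb
      exact ⟨hshort z w b hzw hwb hwz hwb' hzb, hz, hb⟩

theorem isPartialOrder_reflTransGen (h : ∀ a, ¬ TransGen r a a) :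
    IsPartialOrder α (ReflTransGen r) where
  refl _ := .refl
  trans _ _ _ := ReflTransGen.trans
  antisymm a b hab hba := by
    rcases reflTransGen_iff_eq_or_transGen.mp hab with rfl | hab
    · rfl
    rcases reflTransGen_iff_eq_or_transGen.mp hba with rfl | hba
    · rfl
    exact (h a (hab.trans hba)).elim

end Relation

theorem exists_mem_fst_eq_of_le_sup {D : Finset (ℕ × ℕ)}
    (hD : ∃ a b, D.image Prod.fst = Icc a b) {p : ℕ × ℕ} (hp : p ∈ D) {x : ℕ}
    (hpx : p.1 ≤ x) (hx : x ≤ D.sup Prod.fst) : ∃ q ∈ D, q.1 = x := by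
  obtain ⟨a, b, hab⟩ := hD
  obtain ⟨m, hm, hsup⟩ := D.exists_mem_eq_sup ⟨p, hp⟩ Prod.fst
  have hpa : a ≤ p.1 := (mem_Icc.mp (hab ▸ mem_image_of_mem Prod.fst hp)).1
  have hmb : m.1 ≤ b := (mem_Icc.mp (hab ▸ mem_image_of_mem Prod.fst hm)).2
  have hxD : x ∈ D.image Prod.fst := hab ▸ mem_Icc.mpr ⟨hpa.trans hpx, (hsup ▸ hx).trans hmb⟩
  simpa using hxD

theorem DiagRel.trans_of_sup_le {Z V B : Finset (ℕ × ℕ)}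
    (hZ : ∃ a b, Z.image Prod.fst = Icc a b) (hB : ∃ a b, B.image Prod.fst = Icc a b)
    (hZV : DiagRel Z V) (hVZ : ¬ DiagRel V Z) (hVB : DiagRel V B) (hBV : ¬ DiagRel B V)
    (hVZsup : V.sup Prod.fst ≤ Z.sup Prod.fst) (hVBsup : V.sup Prod.fst ≤ B.sup Prod.fst) :
    DiagRel Z B := by
  obtain ⟨p, hp, q, hq, hpq, -⟩ := hZV
  obtain ⟨q', hq', p', hp', hqp', -⟩ := hVB
  obtain ⟨pv, hpv, hsup⟩ := V.exists_mem_eq_sup ⟨q, hq⟩ Prod.fst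
  obtain ⟨pz, hpz, hpz1⟩ := exists_mem_fst_eq_of_le_sup hZ hp
    (hpq ▸ hsup ▸ le_sup (f := Prod.fst) hq) (hsup ▸ hVZsup)
  obtain ⟨pb, hpb, hpb1⟩ := exists_mem_fst_eq_of_le_sup hB hp'
    (hqp' ▸ hsup ▸ le_sup (f := Prod.fst) hq') (hsup ▸ hVBsup)
  have hzv : pz.2 < pv.2 := not_le.mp fun h => hVZ ⟨pv, hpv, pz, hpz, hpz1.symm, h⟩
  have hvb : pv.2 < pb.2 := not_le.mp fun h => hBV ⟨pb, hpb, pv, hpv, hpb1, h⟩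
  exact ⟨pz, hpz, pb, hpb, hpz1.trans hpb1.symm, (hzv.trans hvb).le⟩

theorem rel_extends_to_partial_order_iff_general (T : Finset (Finset (ℕ × ℕ)))
    (hproj : ∀ D ∈ T, ∃ a b : ℕ, D.image Prod.fst = Finset.Icc a b) :
    (∃ le : {D // D ∈ T} → {D // D ∈ T} → Prop, IsPartialOrder {D // D ∈ T} le ∧
      ∀ A B : {D // D ∈ T}, DiagRel A.1 B.1 → le A B) ↔
    (∀ D ∈ T, ∀ D' ∈ T, DiagRel D D' → DiagRel D' D → D = D') := by
  constructor
  · rintro ⟨le, hle, hext⟩ D hD D' hD' h h'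
    exact congrArg Subtype.val (hle.antisymm _ _ (hext ⟨D, hD⟩ ⟨D', hD'⟩ h) (hext _ _ h'))
  intro hanti
  let r : {D // D ∈ T} → {D // D ∈ T} → Prop := fun A B => DiagRel A.1 B.1 ∧ A ≠ B
  have hasymm : ∀ A B, r A B → ¬ DiagRel B.1 A.1 :=
    fun A B hAB hBA => hAB.2 (Subtype.ext (hanti _ A.2 _ B.2 hAB.1 hBA))
  have hacyclic : ∀ A, ¬ Relation.TransGen r A A :=
    Relation.not_transGen_self_of_shortcut (fun A => A.1.sup Prod.fst) univ (by simp)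
      (fun A B hAB hBA => hasymm A B hAB hBA.1)
      (fun Z V B hZV hVB hVZ hVB' hZB => ⟨DiagRel.trans_of_sup_le (hproj _ Z.2) (hproj _ B.2)
        hZV.1 (hasymm Z V hZV) hVB.1 (hasymm V B hVB) hVZ hVB', hZB⟩)
  refine ⟨Relation.ReflTransGen r, Relation.isPartialOrder_reflTransGen hacyclic, fun A B h => ?_⟩
  by_cases hAB : A = B
  · exact hAB ▸ .refl
  · exact .single ⟨h, hAB⟩

theorem rel_extends_to_partial_order_iff (T : Finset (Finset (ℕ × ℕ)))
    (hT : T.Nonempty) (hne : ∀ D ∈ T, D.Nonempty)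
    (hdisj : ∀ D ∈ T, ∀ D' ∈ T, D ≠ D' → Disjoint D D')
    (hproj : ∀ D ∈ T, ∃ a b : ℕ, D.image Prod.fst = Finset.Icc a b) :
    (∃ le : {D // D ∈ T} → {D // D ∈ T} → Prop, IsPartialOrder {D // D ∈ T} le ∧
      ∀ A B : {D // D ∈ T}, DiagRel A.1 B.1 → le A B) ↔
    (∀ D ∈ T, ∀ D' ∈ T, DiagRel D D' → DiagRel D' D → D = D') :=
  rel_extends_to_partial_order_iff_general T hproj
end

section
/- Let e ≥ 1 and p, q, r ≥ 0 with p + 3q + 5r ≤ 2e + 1 and r ≥ 1. Then p + 3q + 6r ≤ 2e + 2 implies the linear system of bidegree (1, e) curves with p simple points, q double points and r triple points in general position is special; more precisely, the interpolation matrix M of size (p + 3q + 6r) × (2e + 2) does not have maximal rank, because the 6 rows corresponding to any triple point are linearly dependent. -/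
open MvPolynomial

/-- Multiplicity of the `i`-th point: the first `p` points are simple, the next
`q` are double, the last `r` are triple. -/
def mult (p q : ℕ) (i : ℕ) : ℕ := if i < p then 1 else if i < p + q then 2 else 3

/-- The generic interpolation matrix for `L_{(1,e)}(1^p, 2^q, 3^r)`: rows are
indexed by a point `i` and a pair `(α,β)` with `α + β < m_i`, columns by
monomials `X^a Y^b` with `a ≤ 1`, `b ≤ e`; the entry is the corresponding
partial derivative of the monomial evaluated at the generic `i`-th point, an
element of the polynomial ring `ℚ[x₁,y₁,…]`. -/
noncomputable def interpMatrix (p q r e : ℕ) :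
    Matrix ((i : Fin (p + q + r)) ×
        {ab : Fin 6 × Fin 6 // (ab.1 : ℕ) + (ab.2 : ℕ) < mult p q i})
      (Fin 2 × Fin (e + 1))
      (MvPolynomial (Fin (p + q + r) × Fin 2) ℚ) :=
  fun row col =>
    MvPolynomial.eval (fun j : Fin 2 => MvPolynomial.X (row.1, j))
      ((fun g => MvPolynomial.pderiv (0 : Fin 2) g)^[(row.2.1.1 : ℕ)]
        ((fun g => MvPolynomial.pderiv (1 : Fin 2) g)^[(row.2.1.2 : ℕ)]
          (MvPolynomial.X (0 : Fin 2) ^ (col.1 : ℕ) *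
            MvPolynomial.X (1 : Fin 2) ^ (col.2 : ℕ))))


lemma rank_le_of_zero_row {m n : Type*} [Fintype m] [Fintype n] [DecidableEq m]
    {R : Type*} [CommRing R] [StrongRankCondition R]
    (A : Matrix m n R) (i0 : m) (h0 : ∀ j, A i0 j = 0) :
    A.rank ≤ Fintype.card m - 1 := by
  classical
  set A' : Matrix {i : m // ¬ i = i0} n R := A.submatrix Subtype.val id with hA'
  set P : (m → R) →ₗ[R] ({i : m // ¬ i = i0} → R) := LinearMap.funLeft R R Subtype.val with hP
  have hcomp : A'.mulVecLin = P.comp A.mulVecLin := by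
    ext x j
    rfl
  have hzero : ∀ x, A.mulVecLin x i0 = 0 := by
    intro x
    simp [Matrix.mulVecLin_apply, Matrix.mulVec, dotProduct, h0]
  set g : LinearMap.range A.mulVecLin →ₗ[R] ({i : m // ¬ i = i0} → R) :=
    P.comp (LinearMap.range A.mulVecLin).subtype with hg
  have hginj : Function.Injective g := by
    intro v w hvw
    apply Subtype.ext
    funext j
    by_cases hj : j = i0
    · subst hj
      obtain ⟨x, hx⟩ := v.2
      obtain ⟨y, hy⟩ := w.2
      rw [← hx, ← hy, hzero, hzero]
    · exact congrFun hvw ⟨j, hj⟩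
  have hrange : LinearMap.range g = LinearMap.range A'.mulVecLin := by
    rw [hg, hcomp, LinearMap.range_comp, LinearMap.range_comp, Submodule.range_subtype]
  have h1 : A.rank = A'.rank := by
    unfold Matrix.rank
    rw [(LinearEquiv.ofInjective g hginj).finrank_eq, hrange]
  rw [h1]
  calc A'.rank ≤ Fintype.card {i : m // ¬ i = i0} := Matrix.rank_le_card_height A'
    _ = Fintype.card m - 1 := by
        rw [Fintype.card_subtype_compl]
        simp [Fintype.card_subtype_eq]

lemma sum_mult0 (p q : ℕ) :
    ∑ i ∈ Finset.range (p + q), (if i < p then 1 else if i < p + q then 3 else 6)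
      = p + 3 * q := by
  induction q with
  | zero =>
    simp only [Nat.add_zero]
    rw [Finset.sum_congr rfl (fun i hi => by rw [if_pos (Finset.mem_range.1 hi)])]
    simp
  | succ q ih =>
    have h2 : p + (q+1) = (p + q) + 1 := by omega
    rw [h2, Finset.sum_range_succ]
    have h1 : ∀ i ∈ Finset.range (p + q),
        (if i < p then 1 else if i < p + q + 1 then 3 else 6)
          = (if i < p then 1 else if i < p + q then 3 else 6) := by
      intro i hi; have := Finset.mem_range.1 hi
      split_ifs <;> omega
    rw [Finset.sum_congr rfl h1, ih, if_neg (by omega), if_pos (by omega)]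
    omega

lemma sum_mult (p q r : ℕ) :
    ∑ i ∈ Finset.range (p + q + r), (if i < p then 1 else if i < p + q then 3 else 6)
      = p + 3 * q + 6 * r := by
  induction r with
  | zero => simpa using sum_mult0 p q
  | succ r ih =>
    have h2 : p + q + (r+1) = (p + q + r) + 1 := by omega
    rw [h2, Finset.sum_range_succ, ih, if_neg (by omega), if_neg (by omega)]; omega

lemma card_rows (p q r : ℕ) :
    Fintype.card ((i : Fin (p + q + r)) ×
        {ab : Fin 6 × Fin 6 // (ab.1 : ℕ) + (ab.2 : ℕ) < mult p q i})
      = p + 3 * q + 6 * r := by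
  rw [Fintype.card_sigma]
  have h : ∀ i : Fin (p + q + r),
      Fintype.card {ab : Fin 6 × Fin 6 // (ab.1 : ℕ) + (ab.2 : ℕ) < mult p q i}
        = (if (i:ℕ) < p then 1 else if (i:ℕ) < p + q then 3 else 6) := by
    intro i
    unfold mult
    split_ifs <;> decide
  rw [Finset.sum_congr rfl (fun i _ => h i)]
  rw [Fin.sum_univ_eq_sum_range (fun i => if i < p then 1 else if i < p + q then 3 else 6)]
  exact sum_mult p q r

lemma mult_eq_three (p q i : ℕ) (hi : p + q ≤ i) : mult p q i = 3 := by
  unfold mult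
  rw [if_neg (by omega), if_neg (by omega)]

lemma row_zero (p q r e : ℕ) (i : Fin (p + q + r))
    (d : {ab : Fin 6 × Fin 6 // (ab.1 : ℕ) + (ab.2 : ℕ) < mult p q i})
    (ha : (d.1.1 : ℕ) = 2) (hb : (d.1.2 : ℕ) = 0) :
    interpMatrix p q r e ⟨i, d⟩ = 0 := by
  funext col
  show MvPolynomial.eval _ _ = 0
  rw [ha, hb]
  simp only [Function.iterate_zero, id_eq, Function.iterate_succ, Function.comp_apply]
  obtain ⟨a, b⟩ := col
  fin_cases a <;> simp [pderiv_pow]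

theorem bidegree_one_system_special (e p q r : ℕ) (he : 1 ≤ e) (hr : 1 ≤ r)
    (h1 : p + 3 * q + 5 * r ≤ 2 * e + 1) (h2 : p + 3 * q + 6 * r ≤ 2 * e + 2) :
    (interpMatrix p q r e).rank < p + 3 * q + 6 * r ∧
    ∀ i : Fin (p + q + r), p + q ≤ (i : ℕ) →
      ¬ LinearIndependent (MvPolynomial (Fin (p + q + r) × Fin 2) ℚ)
        (fun d : {ab : Fin 6 × Fin 6 // (ab.1 : ℕ) + (ab.2 : ℕ) < mult p q i} =>
          interpMatrix p q r e ⟨i, d⟩) := by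
  classical
  have hd0 : ∀ (i : Fin (p + q + r)), p + q ≤ (i : ℕ) →
      ((2 : Fin 6) : ℕ) + ((0 : Fin 6) : ℕ) < mult p q i := by
    intro i hi
    rw [mult_eq_three p q _ hi]
    decide
  constructor
  · set i0 : Fin (p + q + r) := ⟨p + q, by omega⟩ with hi0
    have hle : p + q ≤ (i0 : ℕ) := le_refl _
    set d0 : {ab : Fin 6 × Fin 6 // (ab.1 : ℕ) + (ab.2 : ℕ) < mult p q i0} :=
      ⟨((2 : Fin 6), (0 : Fin 6)), hd0 i0 hle⟩ with hd0'
    have hz : ∀ j, interpMatrix p q r e ⟨i0, d0⟩ j = 0 := by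
      intro j
      rw [row_zero p q r e i0 d0 rfl rfl]
      rfl
    have := rank_le_of_zero_row (interpMatrix p q r e) ⟨i0, d0⟩ hz
    rw [card_rows] at this
    omega
  · intro i hi hLI
    exact hLI.ne_zero ⟨((2 : Fin 6), (0 : Fin 6)), hd0 i hi⟩
      (row_zero p q r e i _ rfl rfl)
end

section
/- The inertial momentum of the 2×3 rectangle {0,1}×{0,1,2} equals 11/2, and among all 6-element subsets of ℕ² with the same center of mass (1/2, 1), the 2×3 rectangle attains the minimum possible inertial momentum. -/
open Finset

def normSq (v : ℚ × ℚ) : ℚ := v.1 ^ 2 + v.2 ^ 2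

def toQ (d : ℕ × ℕ) : ℚ × ℚ := ((d.1 : ℚ), (d.2 : ℚ))

def cm (D : Finset (ℕ × ℕ)) : ℚ × ℚ :=
  ((D.card : ℚ)⁻¹ * ∑ d ∈ D, (d.1 : ℚ), (D.card : ℚ)⁻¹ * ∑ d ∈ D, (d.2 : ℚ))

def inertia (D : Finset (ℕ × ℕ)) : ℚ := ∑ d ∈ D, normSq (toQ d - cm D)

lemma pointwise (d : ℕ × ℕ) :
    (5/4 : ℚ) - (if d ∈ ({(0,1),(1,1)} : Finset (ℕ × ℕ)) then 1 else 0) ≤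
      normSq (toQ d - (1/2, 1)) := by
  obtain ⟨x, y⟩ := d
  simp only [Finset.mem_insert, Finset.mem_singleton, Prod.mk.injEq, normSq, toQ,
    Prod.fst_sub, Prod.snd_sub]
  by_cases hB : (x = 0 ∧ y = 1) ∨ (x = 1 ∧ y = 1)
  · rcases hB with ⟨rfl, rfl⟩ | ⟨rfl, rfl⟩ <;> norm_num
  · rw [if_neg hB]
    push_neg at hB
    have hx4 : ((x:ℚ) - 1/2)^2 ≥ 1/4 := by
      rcases Nat.eq_zero_or_pos x with rfl | hx
      · norm_num
      · have : (1:ℚ) ≤ x := by exact_mod_cast hx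
        nlinarith
    by_cases hy : y = 1
    · subst hy
      have hx2 : 2 ≤ x := by
        rcases hB with ⟨h0, h1⟩
        omega
      have : (2:ℚ) ≤ x := by exact_mod_cast hx2
      push_cast
      nlinarith
    · have hy2 : y = 0 ∨ 2 ≤ y := by omega
      rcases hy2 with rfl | h
      · push_cast; nlinarith
      · have : (2:ℚ) ≤ y := by exact_mod_cast h
        nlinarith

theorem rect_2x3_minimal_inertia :
    inertia ((Finset.range 2) ×ˢ (Finset.range 3)) = 11 / 2 ∧
    ∀ D' : Finset (ℕ × ℕ), D'.card = 6 → cm D' = (1 / 2, 1) →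
      11 / 2 ≤ inertia D' := by
  constructor
  · norm_num [inertia, cm, normSq, toQ, Finset.sum_product, Finset.sum_range_succ]
  · intro D' hcard hcm
    have heq : inertia D' = ∑ d ∈ D', normSq (toQ d - (1/2, 1)) := by
      rw [inertia, hcm]
    rw [heq]
    have h1 : ∑ d ∈ D', ((5/4 : ℚ) - (if d ∈ ({(0,1),(1,1)} : Finset (ℕ × ℕ)) then 1 else 0))
        ≤ ∑ d ∈ D', normSq (toQ d - (1/2, 1)) :=
      Finset.sum_le_sum (fun d _ => pointwise d)
    refine le_trans ?_ h1
    rw [Finset.sum_sub_distrib, Finset.sum_const, hcard]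
    have h2 : ∑ d ∈ D', (if d ∈ ({(0,1),(1,1)} : Finset (ℕ × ℕ)) then (1:ℚ) else 0)
        = ((D'.filter (· ∈ ({(0,1),(1,1)} : Finset (ℕ × ℕ)))).card : ℚ) := by
      rw [Finset.sum_boole]
    have h3 : (D'.filter (· ∈ ({(0,1),(1,1)} : Finset (ℕ × ℕ)))).card ≤ 2 := by
      have : (D'.filter (· ∈ ({(0,1),(1,1)} : Finset (ℕ × ℕ)))) ⊆ ({(0,1),(1,1)} : Finset (ℕ × ℕ)) := by
        intro a ha
        exact (Finset.mem_filter.mp ha).2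
      calc _ ≤ ({(0,1),(1,1)} : Finset (ℕ × ℕ)).card := Finset.card_le_card this
        _ ≤ 2 := Finset.card_insert_le _ _ |>.trans (by simp)
    rw [h2]
    have h4 : ((D'.filter (· ∈ ({(0,1),(1,1)} : Finset (ℕ × ℕ)))).card : ℚ) ≤ 2 := by
      exact_mod_cast h3
    have h5 : (6:ℕ) • (5/4 : ℚ) = 15/2 := by norm_num
    rw [h5]
    linarith
end
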